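/- For n + α + β = -k with k ∈ {1, …, n} (so there is degree reduction), P_n^{(α,β)}(z) = (Γ(n+α+1)/Γ(k+α)) · ((k-1)!/n!) · P_{k-1}^{(α,β)}(z). -/

import Mathlib

open Finset

/-- Generalized binomial coefficient `C(x, m) = x(x-1)⋯(x-m+1)/m!` for complex `x`. -/
noncomputable def gbinom (x : ℂ) (m : ℕ) : ℂ :=
  (∏ i ∈ Finset.range m, (x - i)) / (Nat.factorial m)

/-- Jacobi polynomial `P_n^{(α,β)}(z)` for general complex parameters, via the explicit sum. -/
noncomputable def jacobiP (n : ℕ) (α β : ℂ) (z : ℂ) : ℂ :=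
  (2 : ℂ)⁻¹ ^ n * ∑ j ∈ Finset.range (n + 1),
    gbinom ((n : ℂ) + α) (n - j) * gbinom ((n : ℂ) + β) j * (z - 1) ^ j * (z + 1) ^ (n - j)

open Polynomial in
lemma descPochhammer_smeval_prod (x : ℂ) (m : ℕ) :
    (descPochhammer ℤ m).smeval x = ∏ i ∈ Finset.range m, (x - i) := by
  induction m with
  | zero => simp [descPochhammer_zero]
  | succ m ih =>
      rw [descPochhammer_succ_right, smeval_mul, ih, Finset.prod_range_succ]
      congr 1
      rw [smeval_sub, smeval_X, smeval_natCast]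
      simp

lemma gbinom_eq (x : ℂ) (m : ℕ) : gbinom x m = Ring.choose x m := by
  have h := Ring.descPochhammer_eq_factorial_smul_choose x m
  rw [descPochhammer_smeval_prod] at h
  rw [gbinom, h, nsmul_eq_mul]
  field_simp [Nat.factorial_ne_zero]

lemma gbinom_natCast (u m : ℕ) : gbinom (u : ℂ) m = u.choose m := by
  rw [gbinom_eq, Ring.choose_natCast]

lemma gbinom_natCast' (u m : ℕ) :
    ∏ i ∈ Finset.range m, ((u:ℂ) - i) = (u.choose m : ℂ) * (m.factorial : ℂ) := by
  have h := gbinom_natCast u m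
  rw [gbinom, div_eq_iff (Nat.cast_ne_zero.mpr (Nat.factorial_ne_zero m))] at h
  exact h

lemma gbinom_vandermonde (x y : ℂ) (m : ℕ) :
    ∑ j ∈ Finset.range (m + 1), gbinom x (m - j) * gbinom y j = gbinom (x + y) m := by
  simp only [gbinom_eq]
  rw [Ring.add_choose_eq m (Commute.all x y), Finset.Nat.sum_antidiagonal_eq_sum_range_succ
    (fun a b => Ring.choose x a * Ring.choose y b)]
  rw [← Finset.sum_range_reflect]
  refine Finset.sum_congr rfl fun j hj => ?_
  rw [Finset.mem_range] at hj
  rw [Nat.add_sub_cancel, Nat.sub_sub_self (Nat.lt_succ_iff.mp hj)]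

lemma gbinom_trinomial (x : ℂ) {a c : ℕ} (h : c ≤ a) :
    gbinom x a * (a.choose c : ℂ) = gbinom x c * gbinom (x - c) (a - c) := by
  simp only [gbinom_eq]
  have := Ring.choose_smul_choose x h
  rw [nsmul_eq_mul] at this
  rw [mul_comm, ← this]

lemma sum_reindex (n : ℕ) (F : ℕ → ℕ → ℂ) (h0 : ∀ j t, j ≤ n → t ≤ n → n < j + t → F j t = 0) :
    ∑ j ∈ Finset.range (n+1), ∑ t ∈ Finset.range (n+1), F j t
      = ∑ m ∈ Finset.range (n+1), ∑ j ∈ Finset.range (m+1), F j (m-j) := by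
  rw [← Finset.sum_product']
  have hrhs : ∑ m ∈ Finset.range (n+1), ∑ j ∈ Finset.range (m+1), F j (m-j)
      = ∑ q ∈ (Finset.range (n+1)).sigma (fun m => Finset.range (m+1)), F q.2 (q.1 - q.2) := by
    rw [Finset.sum_sigma]
  rw [hrhs]
  rw [← Finset.sum_filter_of_ne (s := Finset.range (n+1) ×ˢ Finset.range (n+1))
      (p := fun p => p.1 + p.2 ≤ n) (f := fun p => F p.1 p.2) ?_]
  · refine Finset.sum_nbij' (fun p => ⟨p.1 + p.2, p.1⟩) (fun q => (q.2, q.1 - q.2)) ?_ ?_ ?_ ?_ ?_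
    · rintro ⟨j, t⟩ hp
      simp only [Finset.mem_filter, Finset.mem_product, Finset.mem_range] at hp
      simp only [Finset.mem_sigma, Finset.mem_range]
      omega
    · rintro ⟨m, j⟩ hq
      simp only [Finset.mem_sigma, Finset.mem_range] at hq
      simp only [Finset.mem_filter, Finset.mem_product, Finset.mem_range]
      omega
    · rintro ⟨j, t⟩ hp; simp
    · rintro ⟨m, j⟩ hq
      simp only [Finset.mem_sigma, Finset.mem_range] at hq
      have hjm : j + (m - j) = m := by omega
      simp [hjm]
    · rintro ⟨j, t⟩ hp
      simp [Nat.add_sub_cancel_left]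
  · rintro ⟨j, t⟩ hp hne
    simp only [Finset.mem_product, Finset.mem_range] at hp
    by_contra hgt
    exact hne (h0 j t (by omega) (by omega) (by omega))

lemma jacobiP_single (n : ℕ) (α β : ℂ) (z : ℂ) :
    jacobiP n α β z = ∑ m ∈ Finset.range (n+1),
      gbinom ((n:ℂ)+α) (n-m) * gbinom ((n:ℂ)+α+β+(m:ℂ)) m * ((z-1)/2)^m := by
  set x := (n:ℂ) + α with hx
  set y := (n:ℂ) + β with hy
  set F : ℕ → ℕ → ℂ := fun j t =>
    gbinom x (n-j) * gbinom y j * ((n-j).choose t : ℂ) * ((z-1)/2)^(j+t) with hF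
  have step1 : jacobiP n α β z = ∑ j ∈ Finset.range (n+1), ∑ t ∈ Finset.range (n+1), F j t := by
    rw [jacobiP, Finset.mul_sum]
    refine Finset.sum_congr rfl fun j hj => ?_
    rw [Finset.mem_range, Nat.lt_succ_iff] at hj
    have h21 : (z + 1) = (z - 1) + 2 := by ring
    rw [h21, add_pow]
    have hsub : ∑ t ∈ Finset.range (n+1), F j t = ∑ t ∈ Finset.range (n-j+1), F j t := by
      refine (Finset.sum_subset (Finset.range_subset_range.mpr (by omega)) ?_).symm
      intro t _ ht
      rw [Finset.mem_range, Nat.lt_succ_iff, not_le] at ht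
      simp [hF, Nat.choose_eq_zero_of_lt ht]
    rw [hsub, Finset.mul_sum, Finset.mul_sum]
    refine Finset.sum_congr rfl fun t ht => ?_
    rw [Finset.mem_range, Nat.lt_succ_iff] at ht
    have hn : ((n-j)-t) + (j+t) = n := by omega
    have e2 : (2:ℂ)⁻¹^n * 2^((n-j)-t) = 2⁻¹^(j+t) := by
      have h1 : (2:ℂ)⁻¹^n = 2⁻¹^((n-j)-t) * 2⁻¹^(j+t) := by rw [← pow_add, hn]
      rw [h1, mul_right_comm, ← mul_pow]
      norm_num
    simp only [hF]
    rw [div_eq_mul_inv, mul_pow, pow_add (z-1), ← e2, ← hx, ← hy]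
    ring
  have step2 : ∀ j t, j ≤ n → t ≤ n → n < j + t → F j t = 0 := by
    intro j t hj ht hlt
    simp [hF, Nat.choose_eq_zero_of_lt (show n - j < t by omega)]
  rw [step1, sum_reindex n F step2]
  refine Finset.sum_congr rfl fun m hm => ?_
  rw [Finset.mem_range, Nat.lt_succ_iff] at hm
  have inner : ∀ j ∈ Finset.range (m+1), F j (m-j)
      = (gbinom x (n-m) * ((z-1)/2)^m) * (gbinom (x - ((n-m : ℕ) : ℂ)) (m-j) * gbinom y j) := by
    intro j hj
    rw [Finset.mem_range, Nat.lt_succ_iff] at hj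
    simp only [hF]
    have hjm : j + (m - j) = m := by omega
    rw [hjm]
    have hcs : ((n-j).choose (m-j) : ℂ) = ((n-j).choose (n-m) : ℂ) := by
      rw [show m - j = (n-j)-(n-m) from by omega, Nat.choose_symm (by omega)]
    rw [hcs]
    have htri := gbinom_trinomial x (show n-m ≤ n-j by omega)
    rw [show (n-j)-(n-m) = m - j from by omega] at htri
    calc gbinom x (n-j) * gbinom y j * (((n-j).choose (n-m) : ℂ)) * ((z-1)/2)^m
        = (gbinom x (n-j) * (((n-j).choose (n-m) : ℂ))) * gbinom y j * ((z-1)/2)^m := by ring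
      _ = (gbinom x (n-m) * gbinom (x - ((n-m : ℕ) : ℂ)) (m-j)) * gbinom y j * ((z-1)/2)^m := by
          rw [htri]
      _ = (gbinom x (n-m) * ((z-1)/2)^m) * (gbinom (x - ((n-m : ℕ) : ℂ)) (m-j) * gbinom y j) := by
          ring
  rw [Finset.sum_congr rfl inner, ← Finset.mul_sum, gbinom_vandermonde]
  have harg : x - ((n-m : ℕ) : ℂ) + y = (n:ℂ)+α+β+(m:ℂ) := by
    rw [hx, hy, Nat.cast_sub hm]; ring
  rw [harg]; ring

lemma gbinom_zero {k m : ℕ} (hk : 1 ≤ k) (hkm : k ≤ m) : gbinom ((m:ℂ) - k) m = 0 := by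
  rw [gbinom]
  rw [Finset.prod_eq_zero (Finset.mem_range.mpr (show m - k < m by omega))
    (show (m:ℂ) - k - ((m - k : ℕ):ℂ) = 0 by push_cast [Nat.cast_sub hkm]; ring)]
  simp

lemma gbinom_neg (N m : ℕ) :
    gbinom ((m:ℂ) - (N:ℂ) - 1) m = (-1)^m * (N.choose m : ℂ) := by
  have hprod : ∏ i ∈ Finset.range m, ((m:ℂ) - N - 1 - i)
      = (-1)^m * ∏ i ∈ Finset.range m, ((N:ℂ) - i) := by
    rw [← Finset.prod_range_reflect (fun i => ((m:ℂ) - N - 1 - i)) m]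
    have hc : ∀ i ∈ Finset.range m, ((m:ℂ) - N - 1 - ((m - 1 - i : ℕ):ℂ)) = -1 * ((N:ℂ) - i) := by
      intro i hi
      rw [Finset.mem_range] at hi
      have h1 : ((m - 1 - i : ℕ):ℂ) = (m:ℂ) - 1 - i := by
        rw [show m - 1 - i = m - (1 + i) from by omega, Nat.cast_sub (by omega)]
        push_cast; ring
      rw [h1]; ring
    rw [Finset.prod_congr rfl hc, Finset.prod_mul_distrib, Finset.prod_const, Finset.card_range]
  rw [gbinom, hprod, gbinom_natCast']
  have hfac : (m.factorial : ℂ) ≠ 0 := Nat.cast_ne_zero.mpr (Nat.factorial_ne_zero m)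
  field_simp

lemma Gamma_shift (s : ℂ) (hs : Complex.Gamma s ≠ 0) (ℓ : ℕ) :
    Complex.Gamma (s + ℓ) = (∏ i ∈ Finset.range ℓ, (s + i)) * Complex.Gamma s := by
  induction ℓ with
  | zero => simp
  | succ ℓ ih =>
      have hne : s + ℓ ≠ 0 := by
        intro h0
        apply hs
        rw [Complex.Gamma_eq_zero_iff]
        exact ⟨ℓ, by linear_combination h0⟩
      rw [Nat.cast_succ, ← add_assoc, Complex.Gamma_add_one _ hne, ih, Finset.prod_range_succ]
      ring

/-- Degree reduction (Szegő (4.22.3)): if `n + α + β = -k` with `1 ≤ k ≤ n`, then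
`P_n^{(α,β)}(z) = (Γ(n+α+1)/Γ(k+α)) ((k-1)!/n!) P_{k-1}^{(α,β)}(z)`. -/
theorem jacobi_degree_reduction (n k : ℕ) (hk1 : 1 ≤ k) (hkn : k ≤ n) (α β : ℂ)
    (hred : (n : ℂ) + α + β = -(k : ℂ))
    (hG1 : Complex.Gamma ((n : ℂ) + α + 1) ≠ 0) (hG2 : Complex.Gamma ((k : ℂ) + α) ≠ 0)
    (z : ℂ) :
    jacobiP n α β z =
      Complex.Gamma ((n : ℂ) + α + 1) / Complex.Gamma ((k : ℂ) + α) *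
        ((Nat.factorial (k - 1) : ℂ) / (Nat.factorial n : ℂ)) * jacobiP (k - 1) α β z := by
  have hk1' : ((k - 1 : ℕ) : ℂ) = (k : ℂ) - 1 := by
    rw [Nat.cast_sub hk1]; norm_num
  -- the Gamma-ratio constant
  set Q : ℂ := ∏ i ∈ Finset.range (n - k + 1), ((k:ℂ) + α + i) with hQ
  have hGamma : Complex.Gamma ((n : ℂ) + α + 1) = Q * Complex.Gamma ((k : ℂ) + α) := by
    have := Gamma_shift ((k:ℂ) + α) hG2 (n - k + 1)
    rw [show ((k:ℂ) + α + ((n - k + 1 : ℕ):ℂ)) = (n:ℂ) + α + 1 by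
      push_cast [Nat.cast_sub hkn]; ring] at this
    exact this
  have hGdiv : Complex.Gamma ((n : ℂ) + α + 1) / Complex.Gamma ((k : ℂ) + α) = Q := by
    rw [hGamma, mul_div_assoc, div_self hG2, mul_one]
  -- rewrite both sides in the single-power-basis form
  rw [jacobiP_single n, jacobiP_single (k-1), show k - 1 + 1 = k from by omega]
  -- truncate the left sum to `range k`
  have htrunc : ∑ m ∈ Finset.range (n+1),
      gbinom ((n:ℂ)+α) (n-m) * gbinom ((n:ℂ)+α+β+(m:ℂ)) m * ((z-1)/2)^m
      = ∑ m ∈ Finset.range k,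
      gbinom ((n:ℂ)+α) (n-m) * gbinom ((n:ℂ)+α+β+(m:ℂ)) m * ((z-1)/2)^m := by
    refine (Finset.sum_subset (Finset.range_subset_range.mpr (by omega)) ?_).symm
    intro m hm hmk
    rw [Finset.mem_range, not_lt] at hmk
    rw [show (n:ℂ)+α+β+(m:ℂ) = (m:ℂ) - (k:ℂ) by linear_combination hred]
    rw [gbinom_zero hk1 hmk]
    ring
  rw [htrunc, Finset.mul_sum]
  refine Finset.sum_congr rfl fun m hm => ?_
  rw [Finset.mem_range] at hm
  -- evaluate the two "negative integer upper index" binomials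
  have hL : gbinom ((n:ℂ)+α+β+(m:ℂ)) m = (-1)^m * ((k-1).choose m : ℂ) := by
    rw [show (n:ℂ)+α+β+(m:ℂ) = (m:ℂ) - ((k-1:ℕ):ℂ) - 1 by rw [hk1']; linear_combination hred]
    exact gbinom_neg (k-1) m
  have hR : gbinom (((k-1:ℕ):ℂ)+α+β+(m:ℂ)) m = (-1)^m * (n.choose m : ℂ) := by
    rw [show ((k-1:ℕ):ℂ)+α+β+(m:ℂ) = (m:ℂ) - (n:ℂ) - 1 by rw [hk1']; linear_combination hred]
    exact gbinom_neg n m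
  rw [hL, hR]
  -- split the product in `gbinom (n+α) (n-m)`
  set P1 : ℂ := ∏ i ∈ Finset.range (k-1-m), ((k:ℂ) - 1 + α - i) with hP1
  have hsplit : ∏ i ∈ Finset.range (n-m), ((n:ℂ) + α - i) = Q * P1 := by
    rw [show n - m = (n-k+1) + (k-1-m) from by omega, Finset.prod_range_add]
    congr 1
    · rw [hQ, ← Finset.prod_range_reflect (fun i => ((k:ℂ) + α + i)) (n-k+1)]
      refine Finset.prod_congr rfl fun i hi => ?_
      rw [Finset.mem_range] at hi
      rw [show (n - k + 1 - 1 - i : ℕ) = n - k - i from by omega, Nat.cast_sub (by omega),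
        Nat.cast_sub (by omega)]
      ring
    · refine Finset.prod_congr rfl fun i hi => ?_
      rw [Finset.mem_range] at hi
      push_cast [Nat.cast_sub hkn]
      ring
  have hgL : gbinom ((n:ℂ)+α) (n-m) = Q * P1 / ((n-m).factorial : ℂ) := by
    rw [gbinom, hsplit]
  have hgR : gbinom (((k-1:ℕ):ℂ)+α) (k-1-m) = P1 / ((k-1-m).factorial : ℂ) := by
    rw [gbinom, hP1, hk1']
  rw [hgL, hgR, hGdiv]
  -- now everything is rational arithmetic in factorials
  have hmk : m ≤ k - 1 := by omega
  have hmn : m ≤ n := by omega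
  have hscalar : (((k-1).choose m : ℂ)) / ((n-m).factorial : ℂ)
      = ((k-1).factorial : ℂ) / (n.factorial : ℂ)
        * ((n.choose m : ℂ) / ((k-1-m).factorial : ℂ)) := by
    have f1 : ((n-m).factorial : ℂ) ≠ 0 := Nat.cast_ne_zero.mpr (Nat.factorial_ne_zero _)
    have f2 : ((k-1-m).factorial : ℂ) ≠ 0 := Nat.cast_ne_zero.mpr (Nat.factorial_ne_zero _)
    have f3 : (m.factorial : ℂ) ≠ 0 := Nat.cast_ne_zero.mpr (Nat.factorial_ne_zero _)
    have f5 : (n.factorial : ℂ) ≠ 0 := Nat.cast_ne_zero.mpr (Nat.factorial_ne_zero _)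
    rw [Nat.cast_choose ℂ hmk, Nat.cast_choose ℂ hmn]
    field_simp
  calc Q * P1 / ((n-m).factorial:ℂ) * ((-1)^m * ((k-1).choose m :ℂ)) * ((z-1)/2)^m
      = (((k-1).choose m : ℂ) / ((n-m).factorial : ℂ))
          * (Q * P1 * ((-1)^m) * ((z-1)/2)^m) := by ring
    _ = ((k-1).factorial : ℂ)/(n.factorial:ℂ) * ((n.choose m:ℂ)/((k-1-m).factorial:ℂ))
          * (Q * P1 * ((-1)^m) * ((z-1)/2)^m) := by rw [hscalar]
    _ = Q * (((k-1).factorial:ℂ)/(n.factorial:ℂ))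
          * (P1/((k-1-m).factorial:ℂ) * ((-1)^m * (n.choose m:ℂ)) * ((z-1)/2)^m) := by ring
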